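/- arXiv:2504.03067 — 3 statements merged into one kernel-verified Lean document; each statement's English description precedes it below -/
import Mathlib

section
/- Let L > 0, let φ : [0, L] → ℝ be continuous, and let γ : [0, L] → ℝ² be differentiable with γ'(s) = (cos φ(s), sin φ(s)) for all s ∈ [0, L] (a unit-speed planar curve). Then the linear control system dw/ds = G(s) f(s), w(0) = 0, is controllable on [0, L]: for every wrench vector w ∈ ℝ³ there exists a continuous function f : [0, L] → ℝ² such that ∫₀ᴸ G(s) f(s) ds = w. -/
open Matrix Real

/-- The planar rotation matrix `R(θ)`. -/
noncomputable def rot (θ : ℝ) : Matrix (Fin 2) (Fin 2) ℝ :=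
  !![Real.cos θ, -Real.sin θ; Real.sin θ, Real.cos θ]

/-- `γ⊥ = R(π/2) γ`. -/
noncomputable def gperp (γ : Fin 2 → ℝ) : Fin 2 → ℝ :=
  (rot (Real.pi / 2)).mulVec γ

/-- The grasp map matrix `G`: its first two rows form `R(φ)`, its third row is `(γ⊥)ᵀ R(φ)`. -/
noncomputable def graspMap (φ : ℝ) (γ : Fin 2 → ℝ) : Matrix (Fin 3) (Fin 2) ℝ :=
  Matrix.of fun i j =>
    if h : (i : ℕ) < 2 then rot φ ⟨i, h⟩ j
    else Matrix.vecMul (gperp γ) (rot φ) j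

/-!
In the body frame, i.e. writing `f = R(φ)ᵀ u`, the grasp map becomes `u ↦ (u, γ⊥ ⬝ u)`: the
force `u` together with its torque about the origin, and `φ` drops out. Constant forces `e₀`,
`e₁` reach `(L, 0, *)` and `(0, L, *)`. The force `u = (γ - m)⊥`, with `m` the mean of `γ`, has
zero total force and total torque `∫ γ ⬝ (γ - m) = ∫ |γ - m|²`, which is positive because a
unit-speed curve is not constant. These three reachable wrenches form an upper triangular matrix
with nonzero diagonal, so they span `ℝ³`, and reachable wrenches form a subspace.
-/

open MeasureTheory Set

section Reachable

variable {m n : Type*} [Fintype m] [Fintype n]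

/-- Integrability of `M f` is part of the definition so that reachable wrenches form a subspace
without any regularity assumption on `M`. -/
def reachableSubmodule (M : ℝ → Matrix m n ℝ) (a b : ℝ) : Submodule ℝ (m → ℝ) where
  carrier := {w | ∃ f : ℝ → n → ℝ, ContinuousOn f (Icc a b) ∧
    IntervalIntegrable (fun s => M s *ᵥ f s) volume a b ∧ ∫ s in a..b, M s *ᵥ f s = w}
  add_mem' := by
    rintro _ _ ⟨f, hf, hfi, rfl⟩ ⟨g, hg, hgi, rfl⟩
    refine ⟨f + g, hf.add hg, ?_, ?_⟩
    · simpa only [Pi.add_apply, mulVec_add] using hfi.add hgi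
    · simp only [Pi.add_apply, mulVec_add, intervalIntegral.integral_add hfi hgi]
  zero_mem' := ⟨0, continuousOn_const, by simp, by simp⟩
  smul_mem' := by
    rintro c _ ⟨f, hf, hfi, rfl⟩
    have hcf : (fun s => M s *ᵥ (c • f) s) = c • fun s => M s *ᵥ f s := by
      ext s
      simp only [Pi.smul_apply, mulVec_smul]
    refine ⟨c • f, hf.const_smul c, hcf ▸ hfi.smul c, ?_⟩
    simp only [Pi.smul_apply, mulVec_smul, intervalIntegral.integral_smul]

theorem mem_reachableSubmodule {M : ℝ → Matrix m n ℝ} {a b : ℝ} {w : m → ℝ} :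
    w ∈ reachableSubmodule M a b ↔ ∃ f : ℝ → n → ℝ, ContinuousOn f (Icc a b) ∧
      IntervalIntegrable (fun s => M s *ᵥ f s) volume a b ∧ ∫ s in a..b, M s *ᵥ f s = w :=
  Iff.rfl

end Reachable

theorem Matrix.span_range_eq_top_of_isUpperTriangular {n K : Type*} [Fintype n] [LinearOrder n]
    [Field K] {A : Matrix n n K} (hA : A.IsUpperTriangular) (hdiag : ∀ i, A i i ≠ 0) :
    Submodule.span K (range A) = ⊤ := by
  refine LinearIndependent.span_eq_top_of_card_eq_finrank'
    (linearIndependent_rows_of_det_ne_zero ?_) (by simp)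
  rw [det_of_isUpperTriangular hA]
  exact Finset.prod_ne_zero_iff.mpr fun i _ => hdiag i

theorem ContinuousOn.dotProduct {α ι : Type*} [TopologicalSpace α] [Fintype ι] {f g : α → ι → ℝ}
    {s : Set α} (hf : ContinuousOn f s) (hg : ContinuousOn g s) :
    ContinuousOn (fun x => f x ⬝ᵥ g x) s :=
  (continuous_fst.dotProduct continuous_snd).comp_continuousOn (hf.prodMk hg)

namespace intervalIntegral

theorem integral_pi_apply {ι : Type*} [Fintype ι] {F : ℝ → ι → ℝ} {a b : ℝ}
    (hF : IntervalIntegrable F volume a b) (i : ι) :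
    (∫ s in a..b, F s) i = ∫ s in a..b, F s i :=
  ((ContinuousLinearMap.proj (R := ℝ) i).intervalIntegral_comp_comm hF).symm

theorem integral_dotProduct_left {ι : Type*} [Fintype ι] {F : ℝ → ι → ℝ} {a b : ℝ} (c : ι → ℝ)
    (hF : IntervalIntegrable F volume a b) :
    ∫ s in a..b, c ⬝ᵥ F s = c ⬝ᵥ ∫ s in a..b, F s :=
  (LinearMap.toContinuousLinearMap (dotProductBilin ℝ ℝ c)).intervalIntegral_comp_comm hF

theorem integral_sub_intervalAverage {E : Type*} [NormedAddCommGroup E] [NormedSpace ℝ E]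
    [CompleteSpace E] {a b : ℝ} (hab : a ≤ b) (f : ℝ → E) :
    ∫ x in a..b, (f x - ⨍ y in a..b, f y) = 0 := by
  rw [integral_of_le hab, ← uIoc_of_le hab]
  exact setAverage_sub_setAverage (by simp) f

end intervalIntegral

theorem integral_dotProduct_sub_intervalAverage_pos {ι : Type*} [Fintype ι] {γ : ℝ → ι → ℝ}
    {a b : ℝ} (hab : a < b) (hγ : ContinuousOn γ (Icc a b))
    (hne : ∀ c, ∃ t ∈ Icc a b, γ t ≠ c) :
    0 < ∫ s in a..b, γ s ⬝ᵥ (γ s - ⨍ t in a..b, γ t) := by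
  set m := ⨍ t in a..b, γ t
  have hδ : ContinuousOn (fun s => γ s - m) (Icc a b) := hγ.sub continuousOn_const
  have hsq : ContinuousOn (fun s => (γ s - m) ⬝ᵥ (γ s - m)) (Icc a b) := hδ.dotProduct hδ
  have hcross : ∫ s in a..b, m ⬝ᵥ (γ s - m) = 0 := by
    rw [intervalIntegral.integral_dotProduct_left m (hδ.intervalIntegrable_of_Icc hab.le),
      intervalIntegral.integral_sub_intervalAverage hab.le, dotProduct_zero]
  have hsplit (s : ℝ) : γ s ⬝ᵥ (γ s - m) = (γ s - m) ⬝ᵥ (γ s - m) + m ⬝ᵥ (γ s - m) := by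
    rw [← add_dotProduct, sub_add_cancel]
  simp_rw [hsplit]
  rw [intervalIntegral.integral_add (hsq.intervalIntegrable_of_Icc hab.le)
    ((continuousOn_const.dotProduct hδ).intervalIntegrable_of_Icc hab.le), hcross, add_zero]
  obtain ⟨t, ht, hne⟩ := hne m
  refine intervalIntegral.integral_pos hab hsq (fun s _ => dotProduct_self_star_nonneg _)
    ⟨t, ht, (dotProduct_self_star_nonneg _).lt_of_ne' ?_⟩
  exact mt dotProduct_self_eq_zero.mp (sub_ne_zero.mpr hne)

theorem exists_ne_of_hasDerivWithinAt_Icc {E : Type*} [NormedAddCommGroup E] [NormedSpace ℝ E]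
    {γ : ℝ → E} {v : E} {a b s : ℝ} (hab : a < b) (hs : s ∈ Icc a b)
    (hγ : HasDerivWithinAt γ v (Icc a b) s) (hv : v ≠ 0) (c : E) : ∃ t ∈ Icc a b, γ t ≠ c := by
  by_contra! hconst
  have hzero : HasDerivWithinAt γ 0 (Icc a b) s :=
    (hasDerivWithinAt_const s _ c).congr hconst (hconst s hs)
  exact hv ((uniqueDiffOn_Icc hab s hs).eq_deriv _ hγ hzero)

@[fun_prop]
theorem continuous_rot : Continuous rot := by
  unfold rot
  fun_prop

@[fun_prop]
theorem continuous_gperp : Continuous gperp :=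
  continuous_const.matrix_mulVec continuous_id

theorem gperp_apply (g : Fin 2 → ℝ) : gperp g = ![-g 1, g 0] := by
  ext i
  fin_cases i <;> simp [gperp, rot, mulVec, dotProduct, Fin.sum_univ_two]

theorem gperp_dotProduct_gperp (a b : Fin 2 → ℝ) : gperp a ⬝ᵥ gperp b = a ⬝ᵥ b := by
  simp only [gperp_apply, dotProduct, Fin.sum_univ_two, cons_val_zero, cons_val_one]
  ring

noncomputable def wrench (p u : Fin 2 → ℝ) : Fin 3 → ℝ := ![u 0, u 1, gperp p ⬝ᵥ u]

theorem continuous_wrench : Continuous fun x : (Fin 2 → ℝ) × (Fin 2 → ℝ) => wrench x.1 x.2 := by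
  unfold wrench
  simp only [gperp_apply, dotProduct, Fin.sum_univ_two]
  fun_prop

theorem graspMap_mulVec_rot_transpose_mulVec (θ : ℝ) (p u : Fin 2 → ℝ) :
    graspMap θ p *ᵥ ((rot θ)ᵀ *ᵥ u) = wrench p u := by
  ext i
  fin_cases i <;>
    simp [graspMap, wrench, rot, gperp_apply, mulVec, vecMul, dotProduct, Fin.sum_univ_two]
  · linear_combination u 0 * sin_sq_add_cos_sq θ
  · linear_combination u 1 * sin_sq_add_cos_sq θ
  · linear_combination (p 0 * u 1 - p 1 * u 0) * sin_sq_add_cos_sq θ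

theorem integral_wrench_mem_reachableSubmodule {L : ℝ} (hL : 0 ≤ L) {φ : ℝ → ℝ}
    {γ u : ℝ → Fin 2 → ℝ} (hφ : ContinuousOn φ (Icc 0 L)) (hγ : ContinuousOn γ (Icc 0 L))
    (hu : ContinuousOn u (Icc 0 L)) :
    ∫ s in (0:ℝ)..L, wrench (γ s) (u s) ∈
      reachableSubmodule (fun s => graspMap (φ s) (γ s)) 0 L := by
  refine mem_reachableSubmodule.mpr ⟨fun s => (rot (φ s))ᵀ *ᵥ u s, by fun_prop, ?_, ?_⟩
  all_goals simp only [graspMap_mulVec_rot_transpose_mulVec]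
  exact (continuous_wrench.comp_continuousOn (hγ.prodMk hu)).intervalIntegrable_of_Icc hL

theorem reachableSubmodule_graspMap_eq_top {L : ℝ} (hL : 0 < L) {φ : ℝ → ℝ}
    {γ : ℝ → Fin 2 → ℝ} (hφ : ContinuousOn φ (Icc 0 L))
    (hγ : ∀ s ∈ Icc (0:ℝ) L, HasDerivWithinAt γ ![cos (φ s), sin (φ s)] (Icc 0 L) s) :
    reachableSubmodule (fun s => graspMap (φ s) (γ s)) 0 L = ⊤ := by
  have hγc : ContinuousOn γ (Icc 0 L) := fun s hs => (hγ s hs).continuousWithinAt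
  set m := ⨍ t in (0:ℝ)..L, γ t
  set forces : Fin 3 → ℝ → Fin 2 → ℝ :=
    ![fun _ => ![1, 0], fun _ => ![0, 1], fun s => gperp (γ s - m)]
  have hcont (i : Fin 3) : ContinuousOn (forces i) (Icc 0 L) := by
    fin_cases i
    · exact continuousOn_const
    · exact continuousOn_const
    · exact continuous_gperp.comp_continuousOn (hγc.sub continuousOn_const)
  set A : Matrix (Fin 3) (Fin 3) ℝ := fun i => ∫ s in (0:ℝ)..L, wrench (γ s) (forces i s)
  have hA (i j : Fin 3) : A i j = ∫ s in (0:ℝ)..L, wrench (γ s) (forces i s) j :=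
    intervalIntegral.integral_pi_apply ((continuous_wrench.comp_continuousOn
      (hγc.prodMk (hcont i))).intervalIntegrable_of_Icc hL.le) j
  have hδ (i : Fin 2) : ∫ s in (0:ℝ)..L, (γ s i - m i) = 0 := by
    have := intervalIntegral.integral_pi_apply (F := fun s => γ s - m)
      ((hγc.sub continuousOn_const).intervalIntegrable_of_Icc hL.le) i
    rw [intervalIntegral.integral_sub_intervalAverage hL.le] at this
    exact this.symm
  have hne : ∀ c, ∃ t ∈ Icc 0 L, γ t ≠ c := by
    refine exists_ne_of_hasDerivWithinAt_Icc hL (left_mem_Icc.mpr hL.le)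
      (hγ 0 (left_mem_Icc.mpr hL.le)) ?_
    intro h
    have h0 := congrFun h 0
    have h1 := congrFun h 1
    simp only [cons_val_zero, cons_val_one, Pi.zero_apply] at h0 h1
    simpa [h0, h1] using sin_sq_add_cos_sq (φ 0)
  have htri : A.IsUpperTriangular := by
    intro i j hji
    fin_cases i <;> fin_cases j <;> simp [hA, forces, wrench, gperp_apply, hδ] at hji ⊢
    rw [← neg_eq_zero, ← intervalIntegral.integral_neg]
    simpa using hδ 1
  have hdiag (i : Fin 3) : A i i ≠ 0 := by
    fin_cases i
    · simpa [hA, forces, wrench] using hL.ne'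
    · simpa [hA, forces, wrench] using hL.ne'
    · rw [hA]
      change ∫ s in (0:ℝ)..L, gperp (γ s) ⬝ᵥ gperp (γ s - m) ≠ 0
      simp only [gperp_dotProduct_gperp]
      exact (integral_dotProduct_sub_intervalAverage_pos hL hγc hne).ne'
  rw [eq_top_iff, ← span_range_eq_top_of_isUpperTriangular htri hdiag, Submodule.span_le]
  rintro _ ⟨i, rfl⟩
  exact integral_wrench_mem_reachableSubmodule hL.le hφ hγc (hcont i)

/-- Controllability of the continuum grasp statics system: every wrench `w ∈ ℝ³`
is reached by some continuous contact-force profile `f`. -/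
theorem stmt_0 (L : ℝ) (hL : 0 < L) (φ : ℝ → ℝ) (γ : ℝ → (Fin 2 → ℝ))
    (hφ : ContinuousOn φ (Set.Icc 0 L))
    (hγ : ∀ s ∈ Set.Icc (0:ℝ) L,
      HasDerivWithinAt γ ![Real.cos (φ s), Real.sin (φ s)] (Set.Icc 0 L) s) :
    ∀ w : Fin 3 → ℝ, ∃ f : ℝ → (Fin 2 → ℝ),
      ContinuousOn f (Set.Icc 0 L) ∧
      (∫ s in (0:ℝ)..L, (graspMap (φ s) (γ s)).mulVec (f s)) = w := by
  intro w
  have hw : w ∈ reachableSubmodule (fun s => graspMap (φ s) (γ s)) 0 L := by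
    rw [reachableSubmodule_graspMap_eq_top hL hφ hγ]
    exact Submodule.mem_top
  obtain ⟨f, hf, -, hfw⟩ := hw
  exact ⟨f, hf, hfw⟩
end

section
/- Let L > 0, let B : [0, L] → ℝ^{3×2} be continuous, set Ŵ := ∫₀ᴸ B(s) B(s)ᵀ ds ∈ ℝ^{3×3}, let χ > 0 and w_e ∈ ℝ³, and set p := −χ (I₃ + χ Ŵ)⁻¹ w_e. Define the control u(s) := B(s)ᵀ p and the terminal wrench w_L := ∫₀ᴸ B(s) u(s) ds. Then w_L = Ŵ p, and the cost of this control satisfies J := (1/2) ∫₀ᴸ ‖u(s)‖² ds + (χ/2) ‖w_L + w_e‖² = (χ/2) · w_eᵀ (I₃ + χ Ŵ)⁻¹ w_e. (This is the optimal-cost formula J*(w_e) = (χ/2) w_eᵀ (I₃ + χ Ŵ)⁻¹ w_e of the minimum-force grasping problem when the solution lies in the interior of the control set.) -/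
set_option maxHeartbeats 1000000

open Matrix

private lemma int_sum1 {n : ℕ} (a b : ℝ) (f : Fin n → ℝ → ℝ) (c : Fin n → ℝ)
    (hf : ∀ j, IntervalIntegrable (f j) MeasureTheory.volume a b) :
    ∫ s in a..b, ∑ j, f j s * c j = ∑ j, (∫ s in a..b, f j s) * c j := by
  rw [intervalIntegral.integral_finset_sum (fun j _ => (hf j).mul_const (c j))]
  simp [intervalIntegral.integral_mul_const]

private lemma int_sum2 {m n : ℕ} (a b : ℝ) (f : Fin m → Fin n → ℝ → ℝ)
    (x : Fin m → ℝ) (y : Fin n → ℝ)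
    (hf : ∀ i j, IntervalIntegrable (f i j) MeasureTheory.volume a b) :
    ∫ s in a..b, ∑ i, ∑ j, x i * (f i j s * y j)
      = ∑ i, ∑ j, x i * ((∫ s in a..b, f i j s) * y j) := by
  have hi : ∀ i, IntervalIntegrable (fun s => ∑ j, x i * (f i j s * y j))
      MeasureTheory.volume a b := by
    intro i
    have := IntervalIntegrable.sum (μ := MeasureTheory.volume) (a := a) (b := b)
      (f := fun j s => x i * (f i j s * y j)) Finset.univ
      (fun j _ => ((hf i j).mul_const (y j)).const_mul (x i))
    have heq : (∑ j : Fin n, fun s => x i * (f i j s * y j))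
        = fun s => ∑ j, x i * (f i j s * y j) := by
      funext s; simp
    rwa [heq] at this
  rw [intervalIntegral.integral_finset_sum (fun i _ => hi i)]
  refine Finset.sum_congr rfl fun i _ => ?_
  rw [intervalIntegral.integral_finset_sum (fun j _ =>
    ((hf i j).mul_const (y j)).const_mul (x i))]
  simp [intervalIntegral.integral_const_mul, intervalIntegral.integral_mul_const, mul_assoc]

private lemma dot_sq_eq (A : Matrix (Fin 3) (Fin 2) ℝ) (x y : Fin 3 → ℝ) :
    ∑ k, (Aᵀ.mulVec x k) * (Aᵀ.mulVec y k) = x ⬝ᵥ (A * Aᵀ).mulVec y := by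
  have : ∑ k, (Aᵀ.mulVec x k) * (Aᵀ.mulVec y k) = (Aᵀ.mulVec x) ⬝ᵥ (Aᵀ.mulVec y) := rfl
  rw [this, Matrix.mulVec_transpose, Matrix.dotProduct_mulVec, Matrix.dotProduct_mulVec,
    Matrix.vecMul_vecMul]

/-- Optimal-cost formula for the penalized minimum-force grasping problem:
with `p = −χ(I₃ + χŴ)⁻¹ w_e`, `u(s) = B(s)ᵀ p`, and `w_L = ∫₀ᴸ B(s) u(s) ds`, one has
`w_L = Ŵ p` and
`J = (1/2)∫₀ᴸ ‖u(s)‖² ds + (χ/2)‖w_L + w_e‖² = (χ/2) w_eᵀ (I₃ + χŴ)⁻¹ w_e`. -/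
theorem stmt_12 (L : ℝ) (hL : 0 < L) (B : ℝ → Matrix (Fin 3) (Fin 2) ℝ)
    (hB : ContinuousOn B (Set.Icc 0 L))
    (What : Matrix (Fin 3) (Fin 3) ℝ)
    (hWhat : What = Matrix.of fun i j => ∫ s in (0:ℝ)..L, (B s * (B s)ᵀ) i j)
    (χ : ℝ) (hχ : 0 < χ) (we : Fin 3 → ℝ)
    (p : Fin 3 → ℝ)
    (hp : p = (-χ) • (((1 : Matrix (Fin 3) (Fin 3) ℝ) + χ • What)⁻¹).mulVec we)
    (u : ℝ → Fin 2 → ℝ) (hu : ∀ s, u s = (B s)ᵀ.mulVec p)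
    (wL : Fin 3 → ℝ) (hwL : wL = fun i => ∫ s in (0:ℝ)..L, ((B s).mulVec (u s)) i) :
    wL = What.mulVec p ∧
    (1/2) * (∫ s in (0:ℝ)..L, ∑ i, (u s i) ^ 2) + (χ/2) * (∑ i, (wL i + we i) ^ 2)
      = (χ/2) * (we ⬝ᵥ (((1 : Matrix (Fin 3) (Fin 3) ℝ) + χ • What)⁻¹).mulVec we) := by
  set M : Matrix (Fin 3) (Fin 3) ℝ := 1 + χ • What with hM
  set v : Fin 3 → ℝ := M⁻¹.mulVec we with hv
  -- continuity and integrability of the Gram entries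
  have hcont : ∀ i j, ContinuousOn (fun s => (B s * (B s)ᵀ) i j) (Set.Icc 0 L) := by
    intro i j
    simp only [Matrix.mul_apply, Matrix.transpose_apply]
    apply continuousOn_finset_sum
    intro k _
    exact (((continuous_apply k).comp (continuous_apply i)).comp_continuousOn hB).mul
      (((continuous_apply k).comp (continuous_apply j)).comp_continuousOn hB)
  have hint : ∀ i j, IntervalIntegrable (fun s => (B s * (B s)ᵀ) i j)
      MeasureTheory.volume 0 L := by
    intro i j
    have h := hcont i j
    rw [← Set.uIcc_of_le hL.le] at h
    exact h.intervalIntegrable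
  have hWapp : ∀ i j, What i j = ∫ s in (0:ℝ)..L, (B s * (B s)ᵀ) i j := by
    intro i j; rw [hWhat]; rfl
  -- dot products through the Gramian
  have hdot : ∀ x y : Fin 3 → ℝ,
      x ⬝ᵥ What.mulVec y = ∫ s in (0:ℝ)..L, x ⬝ᵥ (B s * (B s)ᵀ).mulVec y := by
    intro x y
    have h2 := int_sum2 0 L (fun i j s => (B s * (B s)ᵀ) i j) x y (fun i j => hint i j)
    have hl : ∀ s : ℝ, x ⬝ᵥ (B s * (B s)ᵀ).mulVec y
        = ∑ i, ∑ j, x i * ((B s * (B s)ᵀ) i j * y j) := by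
      intro s; simp [dotProduct, Matrix.mulVec, Finset.mul_sum]
    have hr : x ⬝ᵥ What.mulVec y
        = ∑ i, ∑ j, x i * ((∫ s in (0:ℝ)..L, (B s * (B s)ᵀ) i j) * y j) := by
      simp [dotProduct, Matrix.mulVec, Finset.mul_sum, hWapp]
    rw [hr, ← h2]
    exact intervalIntegral.integral_congr (fun s _ => (hl s).symm)
  -- first claim: wL = What.mulVec p
  have h1 : wL = What.mulVec p := by
    funext i
    rw [hwL]
    simp only [hu, Matrix.mulVec_mulVec]
    have hl : ∀ s : ℝ, ((B s * (B s)ᵀ).mulVec p) i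
        = ∑ j, (B s * (B s)ᵀ) i j * p j := by
      intro s; simp [Matrix.mulVec, dotProduct]
    simp only [hl]
    rw [int_sum1 0 L (fun j s => (B s * (B s)ᵀ) i j) p (fun j => hint i j)]
    simp [Matrix.mulVec, dotProduct, hWapp]
  -- positive semidefiniteness of What
  have hpsd : ∀ x : Fin 3 → ℝ, 0 ≤ x ⬝ᵥ What.mulVec x := by
    intro x
    rw [hdot]
    apply intervalIntegral.integral_nonneg hL.le
    intro s _
    rw [← dot_sq_eq]
    exact Finset.sum_nonneg fun k _ => mul_self_nonneg _
  -- M is invertible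
  have hMunit : IsUnit M := by
    rw [← Matrix.mulVec_injective_iff_isUnit]
    intro x y hxy
    have hz : M.mulVec (x - y) = 0 := by
      rw [Matrix.mulVec_sub, hxy, sub_self]
    have hq : (x - y) ⬝ᵥ M.mulVec (x - y) = 0 := by rw [hz]; simp
    have hexp : (x - y) ⬝ᵥ M.mulVec (x - y)
        = (x - y) ⬝ᵥ (x - y) + χ * ((x - y) ⬝ᵥ What.mulVec (x - y)) := by
      rw [hM, Matrix.add_mulVec, dotProduct_add, Matrix.smul_mulVec,
        Matrix.one_mulVec, dotProduct_smul]
      simp [smul_eq_mul]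
    have h2 : 0 ≤ χ * ((x - y) ⬝ᵥ What.mulVec (x - y)) := mul_nonneg hχ.le (hpsd _)
    have h3 : 0 ≤ (x - y) ⬝ᵥ (x - y) :=
      Finset.sum_nonneg fun k _ => mul_self_nonneg _
    have h0 : (x - y) ⬝ᵥ (x - y) = 0 := by nlinarith [hexp, hq]
    have hxy0 : x - y = 0 := by
      funext k
      have hk := (Finset.sum_eq_zero_iff_of_nonneg
        (fun j _ => mul_self_nonneg ((x - y) j))).mp h0 k (Finset.mem_univ k)
      simpa using mul_self_eq_zero.mp hk
    exact sub_eq_zero.mp hxy0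
  have hdet : IsUnit M.det := (Matrix.isUnit_iff_isUnit_det M).mp hMunit
  have hMMinv : M * M⁻¹ = 1 := Matrix.mul_nonsing_inv M hdet
  -- M *ᵥ v = we
  have hMv : M.mulVec v = we := by
    rw [hv, Matrix.mulVec_mulVec, hMMinv, Matrix.one_mulVec]
  have hMv' : we = v + χ • What.mulVec v := by
    rw [← hMv, hM, Matrix.add_mulVec, Matrix.one_mulVec, Matrix.smul_mulVec]
  -- p = -χ • v
  have hpv : p = (-χ) • v := hp
  -- wL + we = v (pointwise)
  have hwe : ∀ i, wL i + we i = v i := by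
    intro i
    have : wL i = (-χ) * (What.mulVec v i) := by
      rw [h1, hpv]
      simp [Matrix.mulVec_smul, Matrix.mulVec_neg, neg_smul, smul_eq_mul]
    rw [this]
    have := congrFun hMv' i
    simp only [Pi.add_apply, Pi.smul_apply, smul_eq_mul] at this
    linarith
  -- the energy integral
  have hen : ∫ s in (0:ℝ)..L, ∑ i, (u s i) ^ 2 = p ⬝ᵥ What.mulVec p := by
    rw [hdot]
    refine intervalIntegral.integral_congr fun s _ => ?_
    show ∑ i, (u s i) ^ 2 = _
    have : ∑ i, (u s i) ^ 2 = ∑ k, ((B s)ᵀ.mulVec p k) * ((B s)ᵀ.mulVec p k) := by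
      simp [hu, sq]
    rw [this, dot_sq_eq]
  -- p ⬝ᵥ What *ᵥ p = χ^2 * (v ⬝ᵥ What *ᵥ v)
  have hpWp : p ⬝ᵥ What.mulVec p = χ^2 * (v ⬝ᵥ What.mulVec v) := by
    rw [hpv, smul_dotProduct, Matrix.mulVec_smul, dotProduct_smul]
    simp [smul_eq_mul]; ring
  -- we ⬝ᵥ v = v ⬝ᵥ v + χ * (v ⬝ᵥ What *ᵥ v)
  have hwv : we ⬝ᵥ v = v ⬝ᵥ v + χ * (v ⬝ᵥ What.mulVec v) := by
    nth_rewrite 1 [hMv']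
    rw [add_dotProduct, smul_dotProduct]
    rw [smul_eq_mul, dotProduct_comm (What.mulVec v) v]
  refine ⟨h1, ?_⟩
  have hsq : ∑ i, (wL i + we i) ^ 2 = v ⬝ᵥ v := by
    simp only [hwe]
    simp [dotProduct, sq]
  rw [hen, hsq, hpWp]
  rw [hwv]
  ring
end

section
/- Let n be a positive integer, let Ŵ ∈ ℝ^{n×n} be symmetric positive definite, and let w_e ∈ ℝⁿ. Then the terminal wrench w_L(χ) := −χ Ŵ (Iₙ + χ Ŵ)⁻¹ w_e converges to −w_e as χ → ∞. -/
open Matrix Filter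

/-!
Writing `1 + χ W = χ (χ⁻¹ 1 + W)` gives `(1 + χ W)⁻¹ = χ⁻¹ (χ⁻¹ 1 + W)⁻¹`, and
`t ↦ (t 1 + W)⁻¹` is continuous at `t = 0` because `W` is invertible; hence
`(1 + χ W)⁻¹ → 0`. Since `−χ W (1 + χ W)⁻¹ = (1 + χ W)⁻¹ − 1`, the terminal wrench tends to `−w_e`.
-/

namespace Matrix

variable {m : Type*} [Fintype m] [DecidableEq m]

theorem det_ne_zero_of_dotProduct_mulVec_pos {R : Type*} [CommRing R] [IsDomain R] [Preorder R]
    {W : Matrix m m R} (hpd : ∀ x : m → R, x ≠ 0 → 0 < x ⬝ᵥ W *ᵥ x) : W.det ≠ 0 := by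
  intro hdet
  obtain ⟨v, hv, hWv⟩ := exists_mulVec_eq_zero_iff.mpr hdet
  simpa [hWv] using hpd v hv

theorem dotProduct_mulVec_one_add_smul_pos {R : Type*} [CommRing R] [LinearOrder R]
    [IsStrictOrderedRing R] {W : Matrix m m R} (hpd : ∀ x : m → R, x ≠ 0 → 0 < x ⬝ᵥ W *ᵥ x)
    {c : R} (hc : 0 ≤ c) (x : m → R) (hx : x ≠ 0) : 0 < x ⬝ᵥ (1 + c • W) *ᵥ x := by
  have hxx : 0 < x ⬝ᵥ x := (Finset.sum_nonneg fun i _ => mul_self_nonneg (x i)).lt_of_ne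
    (Ne.symm (dotProduct_self_eq_zero.not.mpr hx))
  rw [add_mulVec, one_mulVec, smul_mulVec, dotProduct_add, dotProduct_smul, smul_eq_mul]
  exact add_pos_of_pos_of_nonneg hxx (mul_nonneg hc (hpd x hx).le)

theorem neg_smul_mulVec_inv_one_add_smul_mulVec {R : Type*} [CommRing R] {W : Matrix m m R}
    {c : R} (h : IsUnit (1 + c • W).det) (v : m → R) :
    (-c) • W *ᵥ ((1 + c • W)⁻¹ *ᵥ v) = (1 + c • W)⁻¹ *ᵥ v - v := by
  rw [neg_smul, ← smul_mulVec]
  set A := 1 + c • W with hA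
  have hcW : c • W = A - 1 := by rw [hA, add_sub_cancel_left]
  rw [hcW, sub_mulVec, mulVec_mulVec, mul_nonsing_inv _ h, one_mulVec, one_mulVec, neg_sub]

theorem continuousAt_inv_smul_one_add {W : Matrix m m ℝ} (hW : W.det ≠ 0) :
    ContinuousAt (fun t : ℝ => (t • (1 : Matrix m m ℝ) + W)⁻¹) 0 := by
  have hinv : ContinuousAt Inv.inv ((0 : ℝ) • (1 : Matrix m m ℝ) + W) := by
    refine continuousAt_matrix_inv _ ?_
    rw [zero_smul, zero_add, Ring.inverse_eq_inv']
    exact continuousAt_inv₀ hW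
  exact hinv.comp (f := fun t : ℝ => t • (1 : Matrix m m ℝ) + W) (by fun_prop)

theorem tendsto_inv_one_add_smul_atTop {W : Matrix m m ℝ} (hW : W.det ≠ 0) :
    Tendsto (fun χ : ℝ => (1 + χ • W)⁻¹) atTop (nhds 0) := by
  have hsmul : Tendsto (fun t : ℝ => t • (t • (1 : Matrix m m ℝ) + W)⁻¹) (nhds 0) (nhds 0) := by
    have hcont : ContinuousAt (fun t : ℝ => t • (t • (1 : Matrix m m ℝ) + W)⁻¹) 0 :=
      continuousAt_id.smul (continuousAt_inv_smul_one_add hW)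
    simpa using hcont.tendsto
  have hdet : ∀ᶠ t : ℝ in nhds 0, (t • (1 : Matrix m m ℝ) + W).det ≠ 0 :=
    ContinuousAt.eventually_ne (by fun_prop) (by simpa using hW)
  refine (hsmul.comp tendsto_inv_atTop_zero).congr' ?_
  filter_upwards [eventually_gt_atTop 0, tendsto_inv_atTop_zero.eventually hdet] with χ hχ hdetχ
  have hfactor : 1 + χ • W = χ • (χ⁻¹ • (1 : Matrix m m ℝ) + W) := by
    rw [smul_add, smul_smul, mul_inv_cancel₀ hχ.ne', one_smul]
  rw [hfactor]
  exact (inv_smul' _ (Units.mk0 χ hχ.ne') hdetχ.isUnit).symm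

end Matrix

theorem stmt_13_general (n : ℕ) (W : Matrix (Fin n) (Fin n) ℝ)
    (hpd : ∀ x : Fin n → ℝ, x ≠ 0 → 0 < x ⬝ᵥ W.mulVec x)
    (we : Fin n → ℝ) :
    Tendsto
      (fun χ : ℝ =>
        (-χ) • W.mulVec ((((1 : Matrix (Fin n) (Fin n) ℝ) + χ • W)⁻¹).mulVec we))
      atTop (nhds (-we)) := by
  have hunit : ∀ᶠ χ : ℝ in atTop, IsUnit (1 + χ • W).det := by
    filter_upwards [eventually_ge_atTop 0] with χ hχ
    exact (det_ne_zero_of_dotProduct_mulVec_pos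
      (dotProduct_mulVec_one_add_smul_pos hpd hχ)).isUnit
  have hmulVec : Continuous fun M : Matrix (Fin n) (Fin n) ℝ => M *ᵥ we := by fun_prop
  have hlim : Tendsto (fun χ : ℝ => (1 + χ • W)⁻¹ *ᵥ we - we) atTop (nhds (0 *ᵥ we - we)) :=
    ((hmulVec.tendsto 0).comp
      (tendsto_inv_one_add_smul_atTop (det_ne_zero_of_dotProduct_mulVec_pos hpd))).sub_const we
  rw [zero_mulVec, zero_sub] at hlim
  refine hlim.congr' ?_
  filter_upwards [hunit] with χ hχ
  exact (neg_smul_mulVec_inv_one_add_smul_mulVec hχ we).symm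

/-- For symmetric positive definite `Ŵ` the terminal wrench
`w_L(χ) = −χ Ŵ (Iₙ + χ Ŵ)⁻¹ w_e` converges to `−w_e` as `χ → ∞`. -/
theorem stmt_13 (n : ℕ) (hn : 0 < n) (W : Matrix (Fin n) (Fin n) ℝ)
    (hsymm : Wᵀ = W) (hpd : ∀ x : Fin n → ℝ, x ≠ 0 → 0 < x ⬝ᵥ W.mulVec x)
    (we : Fin n → ℝ) :
    Tendsto
      (fun χ : ℝ =>
        (-χ) • W.mulVec ((((1 : Matrix (Fin n) (Fin n) ℝ) + χ • W)⁻¹).mulVec we))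
      atTop (nhds (-we)) :=
  stmt_13_general n W hpd we
end
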